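/- Let w ∈ Cl(g,κ) be homogeneous of parity ε ∈ {0,1} (w lies in the even part if ε = 0 and in the odd part if ε = 1). For a, a' ∈ g, put X := (1/4)(Θ·w − (−1)^ε w·Θ) and Y := ι(a')·w − (−1)^ε w·ι(a). Then τ'_{a'}·w − w·τ'_a = −(ι(a')·X − (−1)^{ε+1} X·ι(a)) − (1/4)(Θ·Y + (−1)^ε Y·Θ). -/

import Mathlib

/-! The identity rests on `τ'_b = -¼ (ι(b) Θ + Θ ι(b))`: substituting it, both sides become
expressions in `ι(a)`, `ι(a')`, `Θ` and `w` that agree because `((-1)^ε)² = 1`.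
To compute the anticommutator, contract the first index of `Θ` against the dual basis,
`Θ = ⅙ Σ_{j,k} ι[e_j,e_k] ι(e^j) ι(e^k)`, and move `ι(b)` through the three factors: by
invariance of `κ` each of the three resulting contractions equals `-2 Σ_k ι[b,e_k] ι(e^k)`. -/

section DualFamily

variable {K V M : Type*} [Field K] [AddCommGroup V] [Module K V] [AddCommGroup M] [Module K M]
  (κ : LinearMap.BilinForm K V) {n : Type*} [Fintype n] [DecidableEq n]
  (e : Module.Basis n K V) (e' : n → V)
  (hdual : ∀ i j, κ (e i) (e' j) = if i = j then (1 : K) else 0)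

include hdual

theorem sum_apply_dual_smul_basis (x : V) : ∑ i, κ x (e' i) • e i = x := by
  conv_rhs => rw [← e.sum_repr x]
  refine Finset.sum_congr rfl fun i _ => congrArg (· • e i) ?_
  have hcoord : κ.flip (e' i) = e.coord i := e.ext fun j => by simp [hdual, Finsupp.single_apply]
  exact LinearMap.congr_fun hcoord x

theorem sum_apply_smul_dual (x : V) : ∑ i, κ (e i) x • e' i = x := by
  let Φ : V →ₗ[K] n → K := LinearMap.pi fun i => κ (e i)
  have hsurj : Function.Surjective Φ := fun v => ⟨∑ j, v j • e' j, by ext i; simp [Φ, hdual]⟩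
  have : FiniteDimensional K V := e.finiteDimensional_of_finite
  have hinj : Function.Injective Φ :=
    (LinearMap.injective_iff_surjective_of_finrank_eq_finrank
      (by simp [Module.finrank_eq_card_basis e])).2 hsurj
  exact hinj (funext fun i => by simp [Φ, hdual])

theorem sum_apply_smul_map_dual (L : V →ₗ[K] M) (x : V) : ∑ i, κ (e i) x • L (e' i) = L x := by
  simp_rw [← map_smul, ← map_sum, sum_apply_smul_dual κ e e' hdual]

end DualFamily

theorem mul_triple_add_triple_mul {R : Type*} [Ring R] (u x y z : R) :
    u * (x * y * z) + x * y * z * u =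
      (u * x + x * u) * y * z - x * (u * y + y * u) * z + x * y * (u * z + z * u) := by
  noncomm_ring

theorem anticomm_mul_sub_mul_anticomm_eq {K A : Type*} [Field K] [Ring A] [Algebra K A]
    (Θ w u u' : A) (s : K) (hs : s * s = 1) :
    (-(4 : K)⁻¹) • (u' * Θ + Θ * u') * w - w * ((-(4 : K)⁻¹) • (u * Θ + Θ * u)) =
      -(u' * ((4 : K)⁻¹ • (Θ * w - s • (w * Θ))) -
          (-s) • ((4 : K)⁻¹ • (Θ * w - s • (w * Θ)) * u)) -
        (4 : K)⁻¹ • (Θ * (u' * w - s • (w * u)) + s • ((u' * w - s • (w * u)) * Θ)) := by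
  simp only [smul_add, smul_sub, add_mul, sub_mul, mul_add, mul_sub, smul_mul_assoc,
    mul_smul_comm, mul_assoc]
  linear_combination (norm := module) hs • (-(4 : K)⁻¹ • (w * (Θ * u)) - (4 : K)⁻¹ • (w * (u * Θ)))

theorem CliffordAlgebra.ι_mul_ι_add_swap_toQuadraticMap {R M : Type*} [CommRing R]
    [AddCommGroup M] [Module R M] (B : LinearMap.BilinForm R M) (hB : ∀ x y, B x y = B y x)
    (x y : M) :
    ι (LinearMap.BilinMap.toQuadraticMap B) x * ι _ y + ι _ y * ι _ x =
      (2 * B x y) • (1 : CliffordAlgebra (LinearMap.BilinMap.toQuadraticMap B)) := by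
  rw [CliffordAlgebra.ι_mul_ι_add_swap, LinearMap.BilinMap.polar_toQuadraticMap, hB y x,
    Algebra.algebraMap_eq_smul_one, two_mul]

section Cubic

variable {K g A : Type*} [Field K] [LieRing g] [LieAlgebra K g] [Ring A] [Algebra K A]
  (κ : LinearMap.BilinForm K g) {n : Type*} [Fintype n] [DecidableEq n]
  (e : Module.Basis n K g) (e' : n → g) (F : g →ₗ[K] A)

noncomputable def cubicElement : A :=
  (6 : K)⁻¹ • ∑ i, ∑ j, ∑ k, κ (e i) ⁅e j, e k⁆ • (F (e' i) * F (e' j) * F (e' k))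

variable (hdual : ∀ i j, κ (e i) (e' j) = if i = j then (1 : K) else 0)
include hdual

theorem cubicElement_eq :
    cubicElement κ e e' F = (6 : K)⁻¹ • ∑ j, ∑ k, F ⁅e j, e k⁆ * F (e' j) * F (e' k) := by
  rw [cubicElement, Finset.sum_comm]
  refine congrArg _ (Finset.sum_congr rfl fun j _ => ?_)
  rw [Finset.sum_comm]
  simp_rw [← smul_mul_assoc, ← Finset.sum_mul, sum_apply_smul_map_dual κ e e' hdual]

theorem sum_sum_apply_lie_smul_mul (hinv : ∀ a b c : g, κ ⁅a, b⁆ c = κ a ⁅b, c⁆) (b : g) :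
    ∑ j, ∑ k, κ b ⁅e j, e k⁆ • (F (e' j) * F (e' k)) = -∑ k, F ⁅b, e k⁆ * F (e' k) := by
  have hskew : ∀ j k, κ b ⁅e j, e k⁆ = -κ (e j) ⁅b, e k⁆ := fun j k => by
    rw [← hinv, ← lie_skew, map_neg, LinearMap.neg_apply, hinv]
  rw [Finset.sum_comm]
  simp_rw [hskew, neg_smul, Finset.sum_neg_distrib, ← smul_mul_assoc, ← Finset.sum_mul,
    sum_apply_smul_map_dual κ e e' hdual]

theorem sum_sum_apply_dual_smul_lie_left_mul (b : g) :
    ∑ j, ∑ k, κ b (e' j) • (F ⁅e j, e k⁆ * F (e' k)) = ∑ k, F ⁅b, e k⁆ * F (e' k) := by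
  rw [Finset.sum_comm]
  simp_rw [← smul_mul_assoc, ← Finset.sum_mul, ← map_smul, ← map_sum, ← smul_lie, ← sum_lie,
    sum_apply_dual_smul_basis κ e e' hdual]

theorem sum_sum_apply_dual_smul_lie_right_mul (b : g) :
    ∑ j, ∑ k, κ b (e' k) • (F ⁅e j, e k⁆ * F (e' j)) = -∑ j, F ⁅b, e j⁆ * F (e' j) := by
  simp_rw [← smul_mul_assoc, ← Finset.sum_mul, ← map_smul, ← map_sum, ← lie_smul, ← lie_sum,
    sum_apply_dual_smul_basis κ e e' hdual, ← lie_skew _ b, map_neg, neg_mul,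
    Finset.sum_neg_distrib]

variable (hF : ∀ x y, F x * F y + F y * F x = (2 * κ x y) • (1 : A))
include hF

omit hdual in
theorem mul_triple_add_triple_mul_of_clifford (b x y z : g) :
    F b * (F x * F y * F z) + F x * F y * F z * F b =
      (2 : K) • (κ b x • (F y * F z) - κ b y • (F x * F z) + κ b z • (F x * F y)) := by
  rw [mul_triple_add_triple_mul, hF, hF, hF]
  simp only [smul_mul_assoc, mul_smul_comm, one_mul, mul_one, mul_smul, smul_add, smul_sub]

theorem mul_cubicElement_add_cubicElement_mul [CharZero K]
    (hinv : ∀ a b c : g, κ ⁅a, b⁆ c = κ a ⁅b, c⁆) (b : g) :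
    F b * cubicElement κ e e' F + cubicElement κ e e' F * F b =
      -∑ k, F ⁅b, e k⁆ * F (e' k) := by
  rw [cubicElement_eq κ e e' F hdual, mul_smul_comm, smul_mul_assoc, ← smul_add]
  simp_rw [Finset.mul_sum, Finset.sum_mul, ← Finset.sum_add_distrib,
    mul_triple_add_triple_mul_of_clifford κ F hF, ← Finset.smul_sum]
  simp_rw [Finset.sum_add_distrib, Finset.sum_sub_distrib]
  rw [sum_sum_apply_lie_smul_mul κ e e' F hdual hinv,
    sum_sum_apply_dual_smul_lie_left_mul κ e e' F hdual,
    sum_sum_apply_dual_smul_lie_right_mul κ e e' F hdual]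
  module

end Cubic

open CliffordAlgebra in
theorem statement15_general (g : Type*) [LieRing g] [LieAlgebra ℂ g]
    (κ : LinearMap.BilinForm ℂ g)
    (hsymm : ∀ a b : g, κ a b = κ b a)
    (hinv : ∀ a b c : g, κ ⁅a, b⁆ c = κ a ⁅b, c⁆)
    (m : ℕ) (e : Module.Basis (Fin m) ℂ g) (e' : Fin m → g)
    (hdual : ∀ i j, κ (e i) (e' j) = if i = j then (1 : ℂ) else 0)
    (τ' : g → CliffordAlgebra (LinearMap.BilinMap.toQuadraticMap κ))
    (hτ' : ∀ a : g, τ' a = (4 : ℂ)⁻¹ •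
      ∑ i : Fin m, ι (LinearMap.BilinMap.toQuadraticMap κ) ⁅a, e i⁆ *
        ι (LinearMap.BilinMap.toQuadraticMap κ) (e' i))
    (Θ : CliffordAlgebra (LinearMap.BilinMap.toQuadraticMap κ))
    (hΘ : Θ = (6 : ℂ)⁻¹ •
      ∑ i : Fin m, ∑ j : Fin m, ∑ k : Fin m, κ (e i) ⁅e j, e k⁆ •
        (ι (LinearMap.BilinMap.toQuadraticMap κ) (e' i) *
          ι (LinearMap.BilinMap.toQuadraticMap κ) (e' j) *
          ι (LinearMap.BilinMap.toQuadraticMap κ) (e' k)))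
    (ε : ℕ)
    (w : CliffordAlgebra (LinearMap.BilinMap.toQuadraticMap κ))
    (X Y : g → g → CliffordAlgebra (LinearMap.BilinMap.toQuadraticMap κ))
    (hX : ∀ a a' : g, X a a' =
      (4 : ℂ)⁻¹ • (Θ * w - ((-1 : ℂ) ^ ε) • (w * Θ)))
    (hY : ∀ a a' : g, Y a a' =
      ι (LinearMap.BilinMap.toQuadraticMap κ) a' * w -
        ((-1 : ℂ) ^ ε) • (w * ι (LinearMap.BilinMap.toQuadraticMap κ) a)) :
    ∀ a a' : g,
      τ' a' * w - w * τ' a =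
        -(ι (LinearMap.BilinMap.toQuadraticMap κ) a' * X a a' -
            ((-1 : ℂ) ^ (ε + 1)) • (X a a' * ι (LinearMap.BilinMap.toQuadraticMap κ) a)) -
          (4 : ℂ)⁻¹ • (Θ * Y a a' + ((-1 : ℂ) ^ ε) • (Y a a' * Θ)) := by
  intro a a'
  have hτ : ∀ b, τ' b = (-(4 : ℂ)⁻¹) • (ι _ b * Θ + Θ * ι _ b) := fun b => by
    rw [hτ', show Θ = cubicElement κ e e' (ι _) from hΘ,
      mul_cubicElement_add_cubicElement_mul κ e e' _ hdual
        (ι_mul_ι_add_swap_toQuadraticMap κ hsymm) hinv,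
      smul_neg, neg_smul, neg_neg]
  have hsq : (-1 : ℂ) ^ ε * (-1) ^ ε = 1 := by rw [← mul_pow, neg_one_mul, neg_neg, one_pow]
  rw [hX, hY, hτ, hτ, pow_succ, mul_neg_one]
  exact anticomm_mul_sub_mul_anticomm_eq Θ w _ _ _ hsq

open CliffordAlgebra in
/-- Let `w ∈ Cl(g,κ)` be homogeneous of parity `ε ∈ {0,1}`.  For
`a, a' ∈ g`, put `X := (1/4)(Θ·w − (−1)^ε w·Θ)` and `Y := ι(a')·w − (−1)^ε w·ι(a)`.  Then
`τ'_{a'}·w − w·τ'_a = −(ι(a')·X − (−1)^{ε+1} X·ι(a)) − (1/4)(Θ·Y + (−1)^ε Y·Θ)`. -/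
theorem statement15 (g : Type*) [LieRing g] [LieAlgebra ℂ g] [FiniteDimensional ℂ g]
    (κ : LinearMap.BilinForm ℂ g)
    (hsymm : ∀ a b : g, κ a b = κ b a)
    (hinv : ∀ a b c : g, κ ⁅a, b⁆ c = κ a ⁅b, c⁆)
    (hnd : κ.Nondegenerate)
    (m : ℕ) (e : Module.Basis (Fin m) ℂ g) (e' : Fin m → g)
    (hdual : ∀ i j, κ (e i) (e' j) = if i = j then (1 : ℂ) else 0)
    (τ' : g → CliffordAlgebra (LinearMap.BilinMap.toQuadraticMap κ))
    (hτ' : ∀ a : g, τ' a = (4 : ℂ)⁻¹ •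
      ∑ i : Fin m, ι (LinearMap.BilinMap.toQuadraticMap κ) ⁅a, e i⁆ *
        ι (LinearMap.BilinMap.toQuadraticMap κ) (e' i))
    (Θ : CliffordAlgebra (LinearMap.BilinMap.toQuadraticMap κ))
    (hΘ : Θ = (6 : ℂ)⁻¹ •
      ∑ i : Fin m, ∑ j : Fin m, ∑ k : Fin m, κ (e i) ⁅e j, e k⁆ •
        (ι (LinearMap.BilinMap.toQuadraticMap κ) (e' i) *
          ι (LinearMap.BilinMap.toQuadraticMap κ) (e' j) *
          ι (LinearMap.BilinMap.toQuadraticMap κ) (e' k)))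
    (ε : ℕ) (hε : ε = 0 ∨ ε = 1)
    (w : CliffordAlgebra (LinearMap.BilinMap.toQuadraticMap κ))
    (hw : w ∈ CliffordAlgebra.evenOdd (LinearMap.BilinMap.toQuadraticMap κ) (ε : ZMod 2))
    (X Y : g → g → CliffordAlgebra (LinearMap.BilinMap.toQuadraticMap κ))
    (hX : ∀ a a' : g, X a a' =
      (4 : ℂ)⁻¹ • (Θ * w - ((-1 : ℂ) ^ ε) • (w * Θ)))
    (hY : ∀ a a' : g, Y a a' =
      ι (LinearMap.BilinMap.toQuadraticMap κ) a' * w -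
        ((-1 : ℂ) ^ ε) • (w * ι (LinearMap.BilinMap.toQuadraticMap κ) a)) :
    ∀ a a' : g,
      τ' a' * w - w * τ' a =
        -(ι (LinearMap.BilinMap.toQuadraticMap κ) a' * X a a' -
            ((-1 : ℂ) ^ (ε + 1)) • (X a a' * ι (LinearMap.BilinMap.toQuadraticMap κ) a)) -
          (4 : ℂ)⁻¹ • (Θ * Y a a' + ((-1 : ℂ) ^ ε) • (Y a a' * Θ)) :=
  statement15_general g κ hsymm hinv m e e' hdual τ' hτ' Θ hΘ ε w X Y hX hY
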